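/- arXiv:1801.08339 — 5 statements merged into one kernel-verified Lean document; each statement's English description precedes it below -/
import Mathlib

section
/- Let H, H₁, H₂, A, Q be real numbers such that the denominator D = H[H(H₁−1)(H₂−1)−(H−1)] − A Q H₁ H₂ is nonzero and H₂ ≠ 1. Then setting K = H, K₁ = H₁, K₂ = H₂ in the two update formulas of the discrete Demoulin system, H₁₂ = −K(H−1)(K₂−1) / ( K[H(H₁−1)(H₂−1)−(H−1)](K₂−1) − A Q H₁ K₂ (H₂−1) ) and K₁₂ = −H(K−1)(H₁−1) / ( H[K(K₁−1)(K₂−1)−(K−1)](H₁−1) − A Q H₁ K₂ (K₁−1) ), the two right-hand sides are equal and both reduce to the discrete Tzitzéica formula H₁₂ = −H(H−1)/D (assuming also H₁ ≠ 1 and the second denominator nonzero). -/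
theorem neg_mul_div_sub_mul_mul_right {K : Type*} [DivisionRing K] (a x y : K) {c : K}
    (hc : c ≠ 0) : -(a * c) / (x * c - y * c) = -a / (x - y) := by
  rw [← sub_mul, ← neg_mul, mul_div_mul_right _ _ hc]

theorem demoulin_tzitzeica_reduction_general (H H₁ H₂ A Q : ℝ)
    (D : ℝ) (hD : D = H * (H * (H₁ - 1) * (H₂ - 1) - (H - 1)) - A * Q * H₁ * H₂)
    (hH2 : H₂ ≠ 1) (hH1 : H₁ ≠ 1) :
    -(H * (H - 1) * (H₂ - 1)) /
        (H * (H * (H₁ - 1) * (H₂ - 1) - (H - 1)) * (H₂ - 1)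
          - A * Q * H₁ * H₂ * (H₂ - 1)) = -(H * (H - 1)) / D ∧
    -(H * (H - 1) * (H₁ - 1)) /
        (H * (H * (H₁ - 1) * (H₂ - 1) - (H - 1)) * (H₁ - 1)
          - A * Q * H₁ * H₂ * (H₁ - 1)) = -(H * (H - 1)) / D := by
  subst hD
  exact ⟨neg_mul_div_sub_mul_mul_right _ _ _ (sub_ne_zero.mpr hH2),
    neg_mul_div_sub_mul_mul_right _ _ _ (sub_ne_zero.mpr hH1)⟩

theorem demoulin_tzitzeica_reduction (H H₁ H₂ A Q : ℝ)
    (D : ℝ) (hD : D = H * (H * (H₁ - 1) * (H₂ - 1) - (H - 1)) - A * Q * H₁ * H₂)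
    (hD0 : D ≠ 0) (hH2 : H₂ ≠ 1) (hH1 : H₁ ≠ 1)
    (hD2 : H * (H * (H₁ - 1) * (H₂ - 1) - (H - 1)) * (H₁ - 1)
            - A * Q * H₁ * H₂ * (H₁ - 1) ≠ 0) :
    -(H * (H - 1) * (H₂ - 1)) /
        (H * (H * (H₁ - 1) * (H₂ - 1) - (H - 1)) * (H₂ - 1)
          - A * Q * H₁ * H₂ * (H₂ - 1)) = -(H * (H - 1)) / D ∧
    -(H * (H - 1) * (H₁ - 1)) /
        (H * (H * (H₁ - 1) * (H₂ - 1) - (H - 1)) * (H₁ - 1)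
          - A * Q * H₁ * H₂ * (H₁ - 1)) = -(H * (H - 1)) / D :=
  demoulin_tzitzeica_reduction_general H H₁ H₂ A Q D hD hH2 hH1
end

section
/- Let φ, φ° : ℤ² → ℝ and H : ℤ² → ℝ satisfy the discrete Moutard equations φ₁₂ = −φ + H(φ₁ + φ₂) and φ°₁₂ = −φ° + H(φ°₁ + φ°₂) (where subscripts denote unit shifts in the two lattice directions). Then the discrete one-form with components Δ₁S = φ° φ₁ − φ°₁ φ and Δ₂S = φ°₂ φ − φ° φ₂ is closed, i.e. Δ₂(φ° φ₁ − φ°₁ φ) = Δ₁(φ°₂ φ − φ° φ₂) at every lattice point, so that a potential S : ℤ² → ℝ exists. -/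
/-!
Substituting the Moutard equation for `φ (m+1, k+1)` and `φc (m+1, k+1)` makes both sides of the
closedness relation the same polynomial, the `H`-terms cancelling because the form is antisymmetric
in `φ` and `φc`. A closed discrete one-form on `ℤ²` is exact: integrate it along the first axis at
`k = 0` and then along the second axis; the first-axis difference of this potential is then
constant in `k` by closedness and vanishes at `k = 0`.
-/

open Finset

section Potential

variable {G : Type*} [AddCommGroup G]

theorem Int.exists_add_one_sub_eq (F : ℤ → G) :
    ∃ h : ℤ → G, h 0 = 0 ∧ ∀ n, h (n + 1) - h n = F n := by
  refine ⟨fun n => ∑ i ∈ Ico 0 n, F i - ∑ i ∈ Ico n 0, F i, by simp, fun n => ?_⟩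
  dsimp only
  rcases le_or_gt 0 n with hn | hn
  · rw [← sum_Ico_add_eq_sum_Ico_add_one hn, Ico_eq_empty_of_le hn,
      Ico_eq_empty_of_le (by omega : (0 : ℤ) ≤ n + 1)]
    abel
  · rw [← insert_Ico_add_one_left_eq_Ico hn, sum_insert (by simp),
      Ico_eq_empty_of_le (by omega : n + 1 ≤ 0), Ico_eq_empty_of_le hn.le]
    abel

theorem exists_potential_of_closed (f g : ℤ → ℤ → G)
    (hclosed : ∀ m k, f m (k + 1) - f m k = g (m + 1) k - g m k) :
    ∃ S : ℤ × ℤ → G, ∀ m k,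
      S (m + 1, k) - S (m, k) = f m k ∧ S (m, k + 1) - S (m, k) = g m k := by
  obtain ⟨A, -, hA⟩ := Int.exists_add_one_sub_eq fun m => f m 0
  choose B hB0 hB using fun m => Int.exists_add_one_sub_eq (g m)
  refine ⟨fun p => A p.1 + B p.1 p.2, fun m k => ⟨?_, by simpa using hB m k⟩⟩
  have hper : Function.Periodic (fun k => A (m + 1) + B (m + 1) k - (A m + B m k) - f m k) 1 :=
    fun k => by
      dsimp only
      linear_combination (norm := abel) hB (m + 1) k - hB m k - hclosed m k
  have h0 : A (m + 1) + B (m + 1) 0 - (A m + B m 0) - f m 0 = 0 := by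
    rw [hB0, hB0, ← hA]; abel
  simpa [h0, sub_eq_zero] using hper.int_mul_eq k

end Potential

theorem moutard_bilinear_form_closed {R : Type*} [CommRing R] (φ φc H : ℤ × ℤ → R)
    (hφ : ∀ m k : ℤ, φ (m + 1, k + 1) = -φ (m, k) + H (m, k) * (φ (m + 1, k) + φ (m, k + 1)))
    (hφc : ∀ m k : ℤ, φc (m + 1, k + 1) = -φc (m, k) + H (m, k) * (φc (m + 1, k) + φc (m, k + 1)))
    (m k : ℤ) :
    (φc (m, k + 1) * φ (m + 1, k + 1) - φc (m + 1, k + 1) * φ (m, k + 1))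
        - (φc (m, k) * φ (m + 1, k) - φc (m + 1, k) * φ (m, k))
      = (φc (m + 1, k + 1) * φ (m + 1, k) - φc (m + 1, k) * φ (m + 1, k + 1))
        - (φc (m, k + 1) * φ (m, k) - φc (m, k) * φ (m, k + 1)) := by
  rw [hφ, hφc]
  ring

theorem moutard_bilinear_potential_closed
    (φ φc H : ℤ × ℤ → ℝ)
    (hφ : ∀ m k : ℤ, φ (m + 1, k + 1) = -φ (m, k) + H (m, k) * (φ (m + 1, k) + φ (m, k + 1)))
    (hφc : ∀ m k : ℤ, φc (m + 1, k + 1) = -φc (m, k) + H (m, k) * (φc (m + 1, k) + φc (m, k + 1))) :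
    (∀ m k : ℤ,
      (φc (m, k + 1) * φ (m + 1, k + 1) - φc (m + 1, k + 1) * φ (m, k + 1))
        - (φc (m, k) * φ (m + 1, k) - φc (m + 1, k) * φ (m, k))
      = (φc (m + 1, k + 1) * φ (m + 1, k) - φc (m + 1, k) * φ (m + 1, k + 1))
        - (φc (m, k + 1) * φ (m, k) - φc (m, k) * φ (m, k + 1))) ∧
    ∃ S : ℤ × ℤ → ℝ, ∀ m k : ℤ,
      S (m + 1, k) - S (m, k) = φc (m, k) * φ (m + 1, k) - φc (m + 1, k) * φ (m, k) ∧
      S (m, k + 1) - S (m, k) = φc (m, k + 1) * φ (m, k) - φc (m, k) * φ (m, k + 1) := by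
  have closed := moutard_bilinear_form_closed φ φc H hφ hφc
  exact ⟨closed, exists_potential_of_closed
    (fun m k => φc (m, k) * φ (m + 1, k) - φc (m + 1, k) * φ (m, k))
    (fun m k => φc (m, k + 1) * φ (m, k) - φc (m, k) * φ (m, k + 1)) closed⟩
end

section
/- Let φ, φ° : ℤ² → ℝ and H : ℤ² → ℝ satisfy the discrete Moutard equations φ₁₂ = −φ + H(φ₁ + φ₂) and φ°₁₂ = −φ° + H(φ°₁ + φ°₂), with φ° nowhere zero, and let S : ℤ² → ℝ satisfy Δ₁S = φ° φ₁ − φ°₁ φ and Δ₂S = φ°₂ φ − φ° φ₂. Then φ' := S/φ° satisfies the discrete Moutard equation φ'₁₂ = −φ' + H'(φ'₁ + φ'₂) with the transformed coefficient H' = (φ°₁ φ°₂ / (φ°₁₂ φ°)) H. -/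
theorem discrete_moutard_transformation
    (φ φc H S : ℤ × ℤ → ℝ)
    (hφ : ∀ m k : ℤ, φ (m + 1, k + 1) = -φ (m, k) + H (m, k) * (φ (m + 1, k) + φ (m, k + 1)))
    (hφc : ∀ m k : ℤ, φc (m + 1, k + 1) = -φc (m, k) + H (m, k) * (φc (m + 1, k) + φc (m, k + 1)))
    (hφc0 : ∀ m k : ℤ, φc (m, k) ≠ 0)
    (hS1 : ∀ m k : ℤ, S (m + 1, k) - S (m, k) = φc (m, k) * φ (m + 1, k) - φc (m + 1, k) * φ (m, k))
    (hS2 : ∀ m k : ℤ, S (m, k + 1) - S (m, k) = φc (m, k + 1) * φ (m, k) - φc (m, k) * φ (m, k + 1)) :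
    ∀ m k : ℤ,
      S (m + 1, k + 1) / φc (m + 1, k + 1)
        = -(S (m, k) / φc (m, k))
          + (φc (m + 1, k) * φc (m, k + 1) / (φc (m + 1, k + 1) * φc (m, k))) * H (m, k)
            * (S (m + 1, k) / φc (m + 1, k) + S (m, k + 1) / φc (m, k + 1)) := by
  intro m k
  have hf := hφ m k
  have hfc := hφc m k
  have h1 := hφc0 m k
  have h2 := hφc0 (m + 1) k
  have h3 := hφc0 m (k + 1)
  have h4 := hφc0 (m + 1) (k + 1)
  have hSa : S (m + 1, k) = S (m, k) + (φc (m, k) * φ (m + 1, k) - φc (m + 1, k) * φ (m, k)) := by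
    have := hS1 m k; linarith
  have hSb : S (m, k + 1) = S (m, k) + (φc (m, k + 1) * φ (m, k) - φc (m, k) * φ (m, k + 1)) := by
    have := hS2 m k; linarith
  have hS12 : S (m + 1, k + 1) = S (m + 1, k) + (φc (m + 1, k + 1) * φ (m + 1, k) - φc (m + 1, k) * φ (m + 1, k + 1)) := by
    have := hS2 (m + 1) k; linarith
  rw [hS12, hSa, hSb, hf, hfc]
  rw [hfc] at h4
  field_simp
  ring
end

section
/- Let τ : ℤ² → ℝ be nowhere zero and let s, s̄, A, Q, H be nowhere-zero functions with τ₁₁ = s τ₁²/(τ A), τ₁₂ = τ₁ τ₂/(τ H), τ₂₂ = s̄ τ₂²/(τ Q) at every lattice point, where s depends only on n₁ and s̄ only on n₂. Then at any lattice point the τ-function equation det[[τ, τ₁, τ₁₁],[τ₂, τ₁₂, τ₁₁₂],[τ₂₂, τ₁₂₂, τ₁₁₂₂]] + s s̄ τ₁₂³ = 0 holds if and only if the discrete Tzitzéica equation H₁₂ = −H(H−1)/( H[H(H₁−1)(H₂−1)−(H−1)] − A Q H₁ H₂ ) holds (assuming all denominators are nonzero). -/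
/-!
The τ-relations and their shifts express all nine entries of the determinant through
τ, τ₁, τ₂ and the fields. After this substitution the left-hand side of the τ-function
equation becomes a nonzero multiple of `H₁₂ · D + H (H - 1)`, where `D` is the denominator
of the Tzitzéica equation.
-/

section TauFunction

variable {K : Type*} [Field K] {t t₁ t₂ t₁₁ t₁₂ t₂₂ t₁₁₂ t₁₂₂ t₁₁₂₂ s sb A Q H H₁ H₂ H₁₂ : K}

theorem tau_det_add_eq_mul
    (ht : t ≠ 0) (ht₁ : t₁ ≠ 0) (ht₂ : t₂ ≠ 0) (hA : A ≠ 0) (hQ : Q ≠ 0)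
    (hH : H ≠ 0) (hH₁ : H₁ ≠ 0) (hH₂ : H₂ ≠ 0) (hH₁₂ : H₁₂ ≠ 0)
    (h₁₁ : t₁₁ = s * t₁ ^ 2 / (t * A)) (h₁₂ : t₁₂ = t₁ * t₂ / (t * H))
    (h₂₂ : t₂₂ = sb * t₂ ^ 2 / (t * Q))
    (h₁₁₂ : t₁₁₂ = t₁₁ * t₁₂ / (t₁ * H₁)) (h₁₂₂ : t₁₂₂ = t₁₂ * t₂₂ / (t₂ * H₂))
    (h₁₁₂₂ : t₁₁₂₂ = t₁₁₂ * t₁₂₂ / (t₁₂ * H₁₂)) :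
    Matrix.det !![t, t₁, t₁₁; t₂, t₁₂, t₁₁₂; t₂₂, t₁₂₂, t₁₁₂₂] + s * sb * t₁₂ ^ 3
      = -(s * sb * t₁ ^ 3 * t₂ ^ 3) / (t ^ 3 * A * Q * H ^ 3 * H₁ * H₂ * H₁₂)
          * (H₁₂ * (H * (H * (H₁ - 1) * (H₂ - 1) - (H - 1)) - A * Q * H₁ * H₂)
              + H * (H - 1)) := by
  subst h₁₁₂₂ h₁₁₂ h₁₂₂ h₁₁ h₁₂ h₂₂
  simp only [Matrix.det_fin_three, Matrix.of_apply, Matrix.cons_val', Matrix.cons_val_zero,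
    Matrix.cons_val_one, Matrix.cons_val_two, Matrix.head_cons, Matrix.tail_cons]
  field_simp
  ring

theorem tau_det_add_eq_zero_iff
    (ht : t ≠ 0) (ht₁ : t₁ ≠ 0) (ht₂ : t₂ ≠ 0) (hs : s ≠ 0) (hsb : sb ≠ 0)
    (hA : A ≠ 0) (hQ : Q ≠ 0) (hH : H ≠ 0) (hH₁ : H₁ ≠ 0) (hH₂ : H₂ ≠ 0) (hH₁₂ : H₁₂ ≠ 0)
    (h₁₁ : t₁₁ = s * t₁ ^ 2 / (t * A)) (h₁₂ : t₁₂ = t₁ * t₂ / (t * H))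
    (h₂₂ : t₂₂ = sb * t₂ ^ 2 / (t * Q))
    (h₁₁₂ : t₁₁₂ = t₁₁ * t₁₂ / (t₁ * H₁)) (h₁₂₂ : t₁₂₂ = t₁₂ * t₂₂ / (t₂ * H₂))
    (h₁₁₂₂ : t₁₁₂₂ = t₁₁₂ * t₁₂₂ / (t₁₂ * H₁₂)) :
    Matrix.det !![t, t₁, t₁₁; t₂, t₁₂, t₁₁₂; t₂₂, t₁₂₂, t₁₁₂₂] + s * sb * t₁₂ ^ 3 = 0
      ↔ H₁₂ * (H * (H * (H₁ - 1) * (H₂ - 1) - (H - 1)) - A * Q * H₁ * H₂)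
          + H * (H - 1) = 0 := by
  rw [tau_det_add_eq_mul ht ht₁ ht₂ hA hQ hH hH₁ hH₂ hH₁₂ h₁₁ h₁₂ h₂₂ h₁₁₂ h₁₂₂ h₁₁₂₂,
    mul_eq_zero, or_iff_right]
  simp [*]

end TauFunction

theorem tau_function_tzitzeica
    (τ A Q H : ℤ × ℤ → ℝ) (s sb : ℤ → ℝ)
    (hτ : ∀ m k : ℤ, τ (m, k) ≠ 0)
    (hs : ∀ m : ℤ, s m ≠ 0) (hsb : ∀ k : ℤ, sb k ≠ 0)
    (hA : ∀ m k : ℤ, A (m, k) ≠ 0) (hQ : ∀ m k : ℤ, Q (m, k) ≠ 0)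
    (hH : ∀ m k : ℤ, H (m, k) ≠ 0)
    (h11 : ∀ m k : ℤ, τ (m + 2, k) = s m * τ (m + 1, k) ^ 2 / (τ (m, k) * A (m, k)))
    (h12 : ∀ m k : ℤ, τ (m + 1, k + 1) = τ (m + 1, k) * τ (m, k + 1) / (τ (m, k) * H (m, k)))
    (h22 : ∀ m k : ℤ, τ (m, k + 2) = sb k * τ (m, k + 1) ^ 2 / (τ (m, k) * Q (m, k)))
    (m k : ℤ)
    (hden : H (m, k) * (H (m, k) * (H (m + 1, k) - 1) * (H (m, k + 1) - 1)
              - (H (m, k) - 1))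
            - A (m, k) * Q (m, k) * H (m + 1, k) * H (m, k + 1) ≠ 0) :
    (Matrix.det !![τ (m, k), τ (m + 1, k), τ (m + 2, k);
                   τ (m, k + 1), τ (m + 1, k + 1), τ (m + 2, k + 1);
                   τ (m, k + 2), τ (m + 1, k + 2), τ (m + 2, k + 2)]
        + s m * sb k * τ (m + 1, k + 1) ^ 3 = 0)
      ↔ H (m + 1, k + 1)
          = -(H (m, k) * (H (m, k) - 1)) /
              (H (m, k) * (H (m, k) * (H (m + 1, k) - 1) * (H (m, k + 1) - 1)
                  - (H (m, k) - 1))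
                - A (m, k) * Q (m, k) * H (m + 1, k) * H (m, k + 1)) := by
  have h112 := h12 (m + 1) k
  have h122 := h12 m (k + 1)
  have h1122 := h12 (m + 1) (k + 1)
  simp only [add_assoc, one_add_one_eq_two] at h112 h122 h1122
  rw [tau_det_add_eq_zero_iff (hτ m k) (hτ (m + 1) k) (hτ m (k + 1)) (hs m) (hsb k)
      (hA m k) (hQ m k) (hH m k) (hH (m + 1) k) (hH m (k + 1)) (hH (m + 1) (k + 1))
      (h11 m k) (h12 m k) (h22 m k) h112 h122 h1122,
    eq_div_iff hden, eq_neg_iff_add_eq_zero]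
end

section
/- Let g/b and ḡ/b̄ be functions on ℤ² such that (g/b)₁₂ (ḡ/b̄)₁ = (ḡ/b̄)₁₂ (g/b)₂ at every lattice point, with all values nonzero. Then there exists a nowhere-zero function τ : ℤ² → ℝ such that g/b = τ₁₂/τ₁ and ḡ/b̄ = τ₁₂/τ₂ at every lattice point. -/
/-!
Integrate the closed form `(a, b)` along the axis `k = 0` and then up every vertical line:
`f (m, k) = A m * B m k`, with `A (m + 1) = a (m, 0) * A m` and `B m` the solution of
`B m (k + 1) = b (m, k) * B m k` with `B m 0 = 1`. Closedness says that `k ↦ a (m, k) * B m k`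
satisfies the same recurrence as `B (m + 1)`, so the two differ by the constant factor
`a (m, 0)`, which is exactly the horizontal step of `f`.
-/

open Finset

section

variable {G : Type*} [CommGroup G]

theorem Int.exists_forall_add_one_eq_mul (a : ℤ → G) :
    ∃ F : ℤ → G, F 0 = 1 ∧ ∀ n, F (n + 1) = a n * F n := by
  refine ⟨fun n => (∏ i ∈ Ico 0 n, a i) / ∏ i ∈ Ico n 0, a i, by simp, fun n => ?_⟩
  dsimp only
  rcases le_or_gt 0 n with hn | hn
  · rw [← prod_Ico_mul_eq_prod_Ico_add_one hn, Ico_eq_empty_of_le hn,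
      Ico_eq_empty_of_le (show (0 : ℤ) ≤ n + 1 by omega)]
    simp [mul_comm]
  · rw [← insert_Ico_add_one_left_eq_Ico hn, prod_insert (by simp), Ico_eq_empty_of_le hn.le,
      Ico_eq_empty_of_le (show n + 1 ≤ 0 by omega)]
    simp

theorem Int.mul_eq_mul_of_forall_add_one_eq_mul {a F F' : ℤ → G}
    (hF : ∀ n, F (n + 1) = a n * F n) (hF' : ∀ n, F' (n + 1) = a n * F' n) (n : ℤ) :
    F n * F' 0 = F' n * F 0 := by
  induction n using Int.induction_on with
  | zero => exact mul_comm _ _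
  | succ n ih => rw [hF, hF', mul_assoc, ih, mul_assoc]
  | pred n ih =>
    rwa [← sub_add_cancel (-(n : ℤ)) 1, hF, hF', mul_assoc, mul_assoc, mul_right_inj] at ih

theorem exists_discrete_potential (a b : ℤ × ℤ → G)
    (hclosed : ∀ m k, a (m, k + 1) * b (m, k) = b (m + 1, k) * a (m, k)) :
    ∃ f : ℤ × ℤ → G, ∀ m k,
      f (m + 1, k) = a (m, k) * f (m, k) ∧ f (m, k + 1) = b (m, k) * f (m, k) := by
  obtain ⟨A, -, hA⟩ := Int.exists_forall_add_one_eq_mul fun m => a (m, 0)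
  choose B hB0 hB using fun m => Int.exists_forall_add_one_eq_mul fun k => b (m, k)
  have hBshift (m k : ℤ) : B (m + 1) k * a (m, 0) = a (m, k) * B m k := by
    have key := Int.mul_eq_mul_of_forall_add_one_eq_mul (F' := fun k => a (m, k) * B m k)
      (hB (m + 1)) (fun k => by rw [hB, ← mul_assoc, hclosed, mul_assoc]) k
    rwa [hB0, hB0, mul_one, mul_one] at key
  refine ⟨fun p => A p.1 * B p.1 p.2, fun m k => ⟨?_, ?_⟩⟩
  · dsimp only
    rw [hA, mul_right_comm, mul_comm (a (m, 0)), hBshift, mul_right_comm, mul_assoc]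
  · dsimp only
    rw [hB, mul_left_comm]

end

theorem discrete_multiplicative_potential
    (r rb : ℤ × ℤ → ℝ)
    (hr : ∀ m k : ℤ, r (m, k) ≠ 0) (hrb : ∀ m k : ℤ, rb (m, k) ≠ 0)
    (hcomp : ∀ m k : ℤ,
      r (m + 1, k + 1) * rb (m + 1, k) = rb (m + 1, k + 1) * r (m, k + 1)) :
    ∃ τ : ℤ × ℤ → ℝ, (∀ m k : ℤ, τ (m, k) ≠ 0) ∧
      ∀ m k : ℤ,
        r (m, k) = τ (m + 1, k + 1) / τ (m + 1, k) ∧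
        rb (m, k) = τ (m + 1, k + 1) / τ (m, k + 1) := by
  -- `τ` is a potential of the form `(rb (m, k - 1), r (m - 1, k))`; `hcomp` is its closedness.
  obtain ⟨f, hf⟩ := exists_discrete_potential (G := ℝˣ)
    (fun p => Units.mk0 (rb (p.1, p.2 - 1)) (hrb _ _))
    (fun p => Units.mk0 (r (p.1 - 1, p.2)) (hr _ _))
    (fun m k => by
      ext
      have h := hcomp (m - 1) (k - 1)
      simp only [sub_add_cancel] at h
      simp only [Units.val_mul, Units.val_mk0, add_sub_cancel_right]
      linear_combination -h)
  refine ⟨fun p => f p, fun m k => (f (m, k)).ne_zero, fun m k => ⟨?_, ?_⟩⟩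
  · simp [(hf (m + 1) k).2]
  · simp [(hf m (k + 1)).1]
end
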